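/- For all ζ ∈ ℂ (with removable singularities filled in by the power-series values), the identity tanch(ζ/2) − 2 φ₁(ζ) Υ(ζ) = φ₂(ζ) holds, where tanch(ζ) = tanh(ζ)/ζ, φ₁(ζ) = (e^ζ − 1)/ζ, φ₂(ζ) = 2(e^ζ − 1 − ζ)/ζ², sinch(ζ) = sinh(ζ)/ζ, and Υ(ζ) = (1/sinch(ζ) − 1)/ζ. -/

import Mathlib

noncomputable section

/-- `tanch(ζ) = tanh(ζ)/ζ`, extended by its power-series value `1` at `ζ = 0`. -/
def tanch (z : ℂ) : ℂ := if z = 0 then 1 else Complex.tanh z / z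

/-- `φ₁(ζ) = (e^ζ − 1)/ζ`, extended by its power-series value `1` at `ζ = 0`. -/
def phi1 (z : ℂ) : ℂ := if z = 0 then 1 else (Complex.exp z - 1) / z

/-- `φ₂(ζ) = 2(e^ζ − 1 − ζ)/ζ²`, extended by its power-series value `1` at `ζ = 0`. -/
def phi2 (z : ℂ) : ℂ := if z = 0 then 1 else 2 * (Complex.exp z - 1 - z) / z ^ 2

/-- `sinch(ζ) = sinh(ζ)/ζ`, extended by its power-series value `1` at `ζ = 0`. -/
def sinch (z : ℂ) : ℂ := if z = 0 then 1 else Complex.sinh z / z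

/-- `Υ(ζ) = (1/sinch(ζ) − 1)/ζ`, extended by its power-series value `0` at `ζ = 0`. -/
def Upsilon (z : ℂ) : ℂ := if z = 0 then 0 else (1 / sinch z - 1) / z

/-!
Since `(e^ζ - 1) / sinh ζ = 1 + tanh (ζ/2)`, the two `tanh (ζ/2)` terms cancel in
`tanch (ζ/2) - 2 φ₁(ζ) Υ(ζ)`, leaving `2 (e^ζ - 1) / ζ² - 2 / ζ = φ₂(ζ)`.
-/

namespace Complex

theorem cosh_half_ne_zero_of_sinh_ne_zero {z : ℂ} (h : sinh z ≠ 0) : cosh (z / 2) ≠ 0 := by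
  intro hc
  apply h
  rw [← mul_div_cancel₀ z two_ne_zero, sinh_two_mul, hc, mul_zero]

theorem sinh_mul_one_add_tanh_half {z : ℂ} (h : cosh (z / 2) ≠ 0) :
    sinh z * (1 + tanh (z / 2)) = exp z - 1 := by
  obtain ⟨w, rfl⟩ : ∃ w, z = 2 * w := ⟨z / 2, by ring⟩
  rw [mul_div_cancel_left₀ w two_ne_zero] at h ⊢
  have hexp : exp (2 * w) = (cosh w + sinh w) ^ 2 := by
    rw [cosh_add_sinh, ← exp_nat_mul]
    norm_num
  rw [sinh_two_mul, tanh_eq_sinh_div_cosh, hexp]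
  field_simp
  linear_combination -cosh_sq_sub_sinh_sq w

end Complex

open Complex in
theorem stmt14_general (z : ℂ) (h2 : z = 0 ∨ Complex.sinh z ≠ 0) :
    tanch (z / 2) - 2 * phi1 z * Upsilon z = phi2 z := by
  rcases h2 with rfl | hs
  · simp [tanch, phi1, phi2, Upsilon]
  have hz : z ≠ 0 := by rintro rfl; simp at hs
  have hz2 : z / 2 ≠ 0 := div_ne_zero hz two_ne_zero
  simp only [tanch, phi1, phi2, Upsilon, sinch, if_neg hz, if_neg hz2]
  rw [← sinh_mul_one_add_tanh_half (cosh_half_ne_zero_of_sinh_ne_zero hs)]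
  field_simp
  ring

/-- The identity `tanch(ζ/2) − 2 φ₁(ζ) Υ(ζ) = φ₂(ζ)` holds for all `ζ ∈ ℂ`
(at which the functions involved are defined, i.e. away from the poles of `tanh(ζ/2)` and of
`1/sinch(ζ)`; the removable singularities at `0` are filled in by the power-series values). -/
theorem stmt14 (z : ℂ) (h1 : Complex.cosh (z / 2) ≠ 0) (h2 : z = 0 ∨ Complex.sinh z ≠ 0) :
    tanch (z / 2) - 2 * phi1 z * Upsilon z = phi2 z :=
  stmt14_general z h2
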